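/- Suppose |𝒴| = k = 2. Let s = (𝐱_s, 𝐱_t, 𝐲_s) be an (m,n)-sample with positive probability under π, let q be a probability mass function on 𝒳, and let g be any classifier. Writing E := Σ_{f'} ρ(f'|s) · R(g|q, f') for the posterior-expected target-domain risk of g, one has U(s, q) ≤ 2·√(E − E²); equivalently, E ≥ U(s, q)²/4 + E². -/

import Mathlib

open Finset
open scoped Classical BigOperators

noncomputable section

/-- A UDA class over input space `X` and label space `Y`: a finitely supported
probability distribution `π` over triples `(p, q, f)`, where `p` and `q` are
probability mass functions on `X` and `f : X → Y` is a classifier. -/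
structure UDAClass (X Y : Type*) [Fintype X] where
  supp : Finset ((X → ℝ) × (X → ℝ) × (X → Y))
  w : ((X → ℝ) × (X → ℝ) × (X → Y)) → ℝ
  w_nonneg : ∀ t, 0 ≤ w t
  w_eq_zero : ∀ t ∉ supp, w t = 0
  w_sum : ∑ t ∈ supp, w t = 1
  p_nonneg : ∀ t ∈ supp, ∀ x, 0 ≤ t.1 x
  p_sum : ∀ t ∈ supp, ∑ x, t.1 x = 1
  q_nonneg : ∀ t ∈ supp, ∀ x, 0 ≤ t.2.1 x
  q_sum : ∀ t ∈ supp, ∑ x, t.2.1 x = 1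

variable {X Y : Type*} [Fintype X] [Fintype Y] [DecidableEq X] [DecidableEq Y]

/-- An `(m,n)`-sample `s = (x_s, x_t, y_s)`. -/
abbrev Sample (X Y : Type*) (m n : ℕ) := (Fin m → X) × (Fin n → X) × (Fin m → Y)

/-- The i.i.d. probability `p^m(xs) = ∏ i, p (xs i)` of a vector. -/
def iidProb {m : ℕ} (p : X → ℝ) (xs : Fin m → X) : ℝ := ∏ i, p (xs i)

/-- The normalizing constant `Z(s)`. -/
def Zval (π : UDAClass X Y) {m n : ℕ} (s : Sample X Y m n) : ℝ :=
  ∑ t ∈ π.supp, π.w t * iidProb t.1 s.1 * iidProb t.2.1 s.2.1 *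
    (if ∀ i, t.2.2 (s.1 i) = s.2.2 i then 1 else 0)

/-- The posterior over classifiers `ρ(f' | s)`. -/
def post (π : UDAClass X Y) {m n : ℕ} (s : Sample X Y m n) (f' : X → Y) : ℝ :=
  (∑ t ∈ π.supp, π.w t * iidProb t.1 s.1 * iidProb t.2.1 s.2.1 *
      (if t.2.2 = f' then 1 else 0) * (if ∀ i, f' (s.1 i) = s.2.2 i then 1 else 0))
    / Zval π s

/-- The aggregated soft classifier `ρ^A(y | x, s)`. -/
def postA (π : UDAClass X Y) {m n : ℕ} (s : Sample X Y m n) (x : X) (y : Y) : ℝ :=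
  ∑ f' : X → Y, post π s f' * (if f' x = y then 1 else 0)

/-- The target-domain risk `R(g | q, f)`. -/
def risk (g : X → Y) (q : X → ℝ) (f : X → Y) : ℝ :=
  ∑ x, q x * (if g x ≠ f x then 1 else 0)

/-- A learner assigns a probability distribution over classifiers to each sample. -/
def IsLearner {m n : ℕ} (A : Sample X Y m n → (X → Y) → ℝ) : Prop :=
  ∀ s, (∀ g, 0 ≤ A s g) ∧ ∑ g : X → Y, A s g = 1

/-- The sample-wise risk `e(𝒜; s, q)`. -/
def swRisk (π : UDAClass X Y) {m n : ℕ} (A : Sample X Y m n → (X → Y) → ℝ)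
    (s : Sample X Y m n) (q : X → ℝ) : ℝ :=
  ∑ x, q x * ∑ f' : X → Y, ∑ g : X → Y,
    post π s f' * A s g * (if f' x ≠ g x then 1 else 0)

/-- The optimal sample-wise risk `e*(s, q)`: the minimum of `e(𝒜; s, q)` over learners. -/
def eStar (π : UDAClass X Y) {m n : ℕ} (s : Sample X Y m n) (q : X → ℝ) : ℝ :=
  sInf {r : ℝ | ∃ A : Sample X Y m n → (X → Y) → ℝ, IsLearner A ∧ swRisk π A s q = r}

/-- Base-2 Shannon entropy of a distribution on a finite set. -/
def entropy2 {Z : Type*} [Fintype Z] (μ : Z → ℝ) : ℝ :=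
  -∑ z, μ z * Real.logb 2 (μ z)

/-- The Posterior Target Label Uncertainty `U(s, q)`. -/
def PTLU (π : UDAClass X Y) {m n : ℕ} (s : Sample X Y m n) (q : X → ℝ) : ℝ :=
  ∑ x, q x * entropy2 (fun y => postA π s x y)

/-- The Empirical Posterior Target Label Uncertainty `Ũ(s)`. -/
def EPTLU (π : UDAClass X Y) {m n : ℕ} (s : Sample X Y m n) : ℝ :=
  (1 / (n : ℝ)) * ∑ i : Fin n, entropy2 (fun y => postA π s (s.2.1 i) y)

/-- The conditional distribution `π_{F|P,Q}(f' | p, q)`. -/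
def condF (π : UDAClass X Y) (p q : X → ℝ) (f' : X → Y) : ℝ :=
  π.w (p, q, f') / ∑ f'' : X → Y, π.w (p, q, f'')

/-- The posterior over classifiers given the infinite-sample observation `(p, q, f_p)`. -/
def postInf (π : UDAClass X Y) (p q : X → ℝ) (f f' : X → Y) : ℝ :=
  (condF π p q f' * (if ∀ x, p x ≠ 0 → f' x = f x then 1 else 0)) /
    ∑ f'' : X → Y, condF π p q f'' * (if ∀ x, p x ≠ 0 → f'' x = f x then 1 else 0)

/-- Aggregation `ρ^A(y | x, p, q, f_p)` of the infinite-sample posterior. -/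
def postAInf (π : UDAClass X Y) (p q : X → ℝ) (f : X → Y) (x : X) (y : Y) : ℝ :=
  ∑ f' : X → Y, postInf π p q f f' * (if f' x = y then 1 else 0)

/-- The restriction `f_p` of a classifier `f` to the support of `p`. -/
def restrictSupp (p : X → ℝ) (f : X → Y) : {x : X // p x ≠ 0} → Y := fun x => f x.1

/-- An infinite-sample learner: maps each observation `(p, q, f_p)` to a
distribution over classifiers. -/
abbrev InfLearner (X Y : Type*) :=
  (p : X → ℝ) → (X → ℝ) → ({x : X // p x ≠ 0} → Y) → ((X → Y) → ℝ)

def IsInfLearner (A : InfLearner X Y) : Prop :=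
  ∀ p q fp, (∀ g, 0 ≤ A p q fp g) ∧ ∑ g : X → Y, A p q fp g = 1

/-- The sample-wise risk `e(𝒜_∞; p, q, f_p)` of an infinite-sample learner. -/
def swRiskInf (π : UDAClass X Y) (A : InfLearner X Y) (p q : X → ℝ) (f : X → Y) : ℝ :=
  ∑ x, q x * ∑ f' : X → Y, ∑ g : X → Y,
    postInf π p q f f' * A p q (restrictSupp p f) g * (if f' x ≠ g x then 1 else 0)

/-- The optimal sample-wise risk `e*(p, q, f_p)` on an infinite-sample observation. -/
def eStarInf (π : UDAClass X Y) (p q : X → ℝ) (f : X → Y) : ℝ :=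
  sInf {r : ℝ | ∃ A : InfLearner X Y, IsInfLearner A ∧ swRiskInf π A p q f = r}

/-- The PTLU `U(p, q, f_p)` on an infinite-sample observation. -/
def PTLUInf (π : UDAClass X Y) (p q : X → ℝ) (f : X → Y) : ℝ :=
  ∑ x, q x * entropy2 (fun y => postAInf π p q f x y)

/-- The expected target-domain risk `R(𝒜 | p, q, f)`. -/
def expRisk {m n : ℕ} (A : Sample X Y m n → (X → Y) → ℝ) (p q : X → ℝ) (f : X → Y) : ℝ :=
  ∑ xs : Fin m → X, ∑ xt : Fin n → X,
    iidProb p xs * iidProb q xt * ∑ g : X → Y, A (xs, xt, fun i => f (xs i)) g * risk g q f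

/-- The overall target-domain risk `R(𝒜)`. -/
def overallRisk (π : UDAClass X Y) {m n : ℕ} (A : Sample X Y m n → (X → Y) → ℝ) : ℝ :=
  ∑ t ∈ π.supp, π.w t * expRisk A t.1 t.2.1 t.2.2

/-- The overall target-domain risk `R(𝒜_∞)` of an infinite-sample learner. -/
def overallRiskInf (π : UDAClass X Y) (A : InfLearner X Y) : ℝ :=
  ∑ t ∈ π.supp, π.w t *
    ∑ g : X → Y, A t.1 t.2.1 (restrictSupp t.1 t.2.2) g * risk g t.2.1 t.2.2


/-- For `0 < t ≤ 1`, `-(t log t) ≤ √t (1 - t)`. -/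
lemma aux_neg_mul_log_le (t : ℝ) (h0 : 0 < t) (h1 : t ≤ 1) :
    -(t * Real.log t) ≤ Real.sqrt t * (1 - t) := by
  have hs : 0 < Real.sqrt t := Real.sqrt_pos.mpr h0
  have hss : Real.sqrt t * Real.sqrt t = t := Real.mul_self_sqrt h0.le
  have hu : (0:ℝ) ≤ -(Real.log t / 2) := by
    have := Real.log_nonpos h0.le h1; linarith
  have hsinh := (Real.self_le_sinh_iff).mpr hu
  have hexp : Real.exp (Real.log t / 2) = Real.sqrt t := by
    rw [← Real.log_sqrt h0.le, Real.exp_log hs]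
  rw [Real.sinh_eq, neg_neg, Real.exp_neg, hexp] at hsinh
  -- hsinh : -(log t / 2) ≤ ((√t)⁻¹ - √t)/2
  have hinv : t * (Real.sqrt t)⁻¹ = Real.sqrt t := by
    field_simp
    rw [Real.sq_sqrt h0.le]
  nlinarith [mul_le_mul_of_nonneg_left hsinh h0.le, hss, hinv]

/-- Degree-4 Taylor lower bound for the symmetric entropy-like function. -/
lemma aux_g_lower (d : ℝ) (h0 : 0 ≤ d) (h1 : d < 1) :
    d^2 + d^4/6 - 2*d^5/(1-d) ≤
      (1+d)*Real.log (1+d) + (1-d)*Real.log (1-d) := by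
  have habs : |d| < 1 := by rwa [abs_of_nonneg h0]
  have h₁ := Real.abs_log_sub_add_sum_range_le habs 4
  have habs' : |(-d)| < 1 := by rwa [abs_neg]
  have h₂ := Real.abs_log_sub_add_sum_range_le habs' 4
  rw [abs_neg, abs_of_nonneg h0] at h₂
  rw [abs_of_nonneg h0] at h₁
  simp only [Finset.sum_range_succ, Finset.sum_range_zero] at h₁ h₂
  norm_num at h₁ h₂
  rw [abs_le] at h₁ h₂
  have e1 : Real.log (1 - d) ≥ -(d + d^2/2 + d^3/3 + d^4/4) - d^5/(1-d) := by
    have := h₁.1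
    nlinarith [this]
  have e2 : Real.log (1 + d) ≥ (d - d^2/2 + d^3/3 - d^4/4) - d^5/(1-d) := by
    have := h₂.1
    nlinarith [this]
  have hd1 : (0:ℝ) ≤ 1 - d := by linarith
  have hd2 : (0:ℝ) ≤ 1 + d := by linarith
  have m1 := mul_le_mul_of_nonneg_left e1 hd1
  have m2 := mul_le_mul_of_nonneg_left e2 hd2
  have key : (1+d)*((d - d^2/2 + d^3/3 - d^4/4) - d^5/(1-d))
      + (1-d)*(-(d + d^2/2 + d^3/3 + d^4/4) - d^5/(1-d))
      = d^2 + d^4/6 - 2*d^5/(1-d) := by ring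
  linarith [m1, m2]

set_option maxHeartbeats 1000000 in
/-- Binary entropy bound: `h(p) ≤ 2√(p(1-p))` for `p ∈ [0,1]`. -/
lemma aux_binent_le (p : ℝ) (hp0 : 0 ≤ p) (hp1 : p ≤ 1) :
    -(p * Real.logb 2 p + (1-p) * Real.logb 2 (1-p)) ≤
      2 * Real.sqrt (p * (1-p)) := by
  rcases eq_or_lt_of_le hp0 with h | h0
  · simp [← h, Real.logb]
  rcases eq_or_lt_of_le hp1 with h | h1
  · simp [h, Real.logb]
  have hq0 : (0:ℝ) < 1 - p := by linarith
  have hl2 : (0:ℝ) < Real.log 2 := Real.log_pos one_lt_two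
  rw [Real.logb, Real.logb]
  rw [show -(p * (Real.log p / Real.log 2) + (1-p) * (Real.log (1-p) / Real.log 2))
      = -(p * Real.log p + (1-p) * Real.log (1-p)) / Real.log 2 by ring]
  rw [div_le_iff₀ hl2]
  set S := Real.sqrt (p * (1-p)) with hSdef
  have hpq : (0:ℝ) ≤ p * (1-p) := by positivity
  have hS0 : 0 ≤ S := Real.sqrt_nonneg _
  have hS2 : S^2 = p * (1-p) := Real.sq_sqrt hpq
  have hsp : Real.sqrt p * Real.sqrt p = p := Real.mul_self_sqrt hp0
  have hsq : Real.sqrt (1-p) * Real.sqrt (1-p) = 1 - p := Real.mul_self_sqrt hq0.le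
  have hspq : Real.sqrt p * Real.sqrt (1-p) = S := (Real.sqrt_mul hp0 _).symm
  rcases le_or_gt (Real.sqrt p + Real.sqrt (1-p)) (2 * Real.log 2) with hcase | hcase
  · -- tail case
    have a1 := aux_neg_mul_log_le p h0 hp1
    have a2 := aux_neg_mul_log_le (1-p) hq0 (by linarith)
    rw [show (1:ℝ) - (1-p) = p by ring] at a2
    have hid : Real.sqrt p * (1-p) + Real.sqrt (1-p) * p
        = S * (Real.sqrt p + Real.sqrt (1-p)) := by
      rw [← hspq]
      linear_combination (-Real.sqrt (1-p)) * hsp - Real.sqrt p * hsq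
    have h3 : -(p * Real.log p + (1-p) * Real.log (1-p))
        ≤ S * (Real.sqrt p + Real.sqrt (1-p)) := by
      rw [← hid]; linarith
    calc -(p * Real.log p + (1-p) * Real.log (1-p))
        ≤ S * (Real.sqrt p + Real.sqrt (1-p)) := h3
      _ ≤ S * (2 * Real.log 2) := mul_le_mul_of_nonneg_left hcase hS0
      _ = 2 * S * Real.log 2 := by ring
  · -- central case
    set d := |1 - 2*p| with hddef
    have hd0 : 0 ≤ d := abs_nonneg _
    have hdS : d^2 = 1 - 4 * S^2 := by
      rw [hddef, sq_abs, hS2]; ring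
    have hsum2 : (Real.sqrt p + Real.sqrt (1-p))^2 = 1 + 2 * S := by
      linear_combination hsp + hsq + 2 * hspq
    have hlog2lb := Real.log_two_gt_d9
    have hlog2ub := Real.log_two_lt_d9
    have hstep : (2 * Real.log 2)^2 ≤ 1 + 2*S := by
      rw [← hsum2]; exact pow_le_pow_left₀ (by positivity) hcase.le 2
    have hll : (0.6931471803:ℝ)^2 ≤ (Real.log 2)^2 :=
      pow_le_pow_left₀ (by norm_num) hlog2lb.le 2
    have hS_lb : (0.4607:ℝ) ≤ S := by nlinarith [hstep, hll]
    have hd_ub2 : d^2 ≤ 0.151023 := by nlinarith [hdS, hS_lb]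
    have hd_ub : d ≤ 0.3887 := by nlinarith [hd_ub2, sq_nonneg (d - 0.3887)]
    have hd1 : d < 1 := by linarith
    have hglow := aux_g_lower d hd0 hd1
    have hgid : (1+d)*Real.log (1+d) + (1-d)*Real.log (1-d)
        = 2*Real.log 2 + 2*(p * Real.log p + (1-p) * Real.log (1-p)) := by
      rcases abs_cases (1 - 2*p) with ⟨he, _⟩ | ⟨he, _⟩
      · have e1 : 1 + d = 2 * (1-p) := by rw [hddef, he]; ring
        have e2 : 1 - d = 2 * p := by rw [hddef, he]; ring
        rw [e1, e2, Real.log_mul two_ne_zero (by linarith),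
          Real.log_mul two_ne_zero (by linarith)]
        ring
      · have e1 : 1 + d = 2 * p := by rw [hddef, he]; ring
        have e2 : 1 - d = 2 * (1-p) := by rw [hddef, he]; ring
        rw [e1, e2, Real.log_mul two_ne_zero (by linarith),
          Real.log_mul two_ne_zero (by linarith)]
        ring
    have hdiv : 2*d^5/(1-d) ≤ 0.193 * d^2 := by
      rw [div_le_iff₀ (by linarith : (0:ℝ) < 1 - d)]
      have h3 : d^3 ≤ 0.05873 := by
        have := pow_le_pow_left₀ hd0 hd_ub 3
        nlinarith [this]
      have m1 : d^2 * d^3 ≤ d^2 * 0.05873 :=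
        mul_le_mul_of_nonneg_left h3 (sq_nonneg d)
      have m2 : d^2 * d ≤ d^2 * 0.3887 :=
        mul_le_mul_of_nonneg_left hd_ub (sq_nonneg d)
      nlinarith [m1, m2, sq_nonneg d]
    have h2 : (1 - 2*S) * (1 + 2*S) = d^2 := by linear_combination -hdS
    have hkey : Real.log 2 * (1 - 2*S) ≤ 0.4035 * d^2 := by
      rcases le_or_gt (1 - 2*S) 0 with hneg | hpos
      · have := mul_nonpos_of_nonneg_of_nonpos hl2.le hneg
        nlinarith [sq_nonneg d]
      · have h1 : (1 - 2*S) * 1.9214 ≤ (1 - 2*S) * (1 + 2*S) :=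
          mul_le_mul_of_nonneg_left (by linarith) hpos.le
        have t1 : Real.log 2 * (1 - 2*S) ≤ 0.6931471808 * (1 - 2*S) :=
          mul_le_mul_of_nonneg_right hlog2ub.le hpos.le
        have t2 : (1 - 2*S) * 1.9214 ≤ d^2 := by linarith [h1, h2.le]
        linarith [t1, t2, sq_nonneg d]
    have gfin : 0.807 * d^2 ≤ d^2 + d^4/6 - 2*d^5/(1-d) := by
      have h4 : (0:ℝ) ≤ d^4 := pow_nonneg hd0 4
      linarith [hdiv, h4]
    linarith [hglow, hgid, hkey, gfin]


section AuxBookkeeping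

variable {X Y : Type*} [Fintype X] [Fintype Y] [DecidableEq X] [DecidableEq Y]

lemma aux_post_nonneg (π : UDAClass X Y) {m n : ℕ} (s : Sample X Y m n)
    (hZ : 0 < Zval π s) (f' : X → Y) : 0 ≤ post π s f' := by
  apply div_nonneg _ hZ.le
  refine Finset.sum_nonneg fun t ht => ?_
  have h1 : 0 ≤ iidProb t.1 s.1 := Finset.prod_nonneg fun i _ => π.p_nonneg t ht _
  have h2 : 0 ≤ iidProb t.2.1 s.2.1 := Finset.prod_nonneg fun i _ => π.q_nonneg t ht _
  have h3 := π.w_nonneg t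
  have h4 : (0:ℝ) ≤ (if t.2.2 = f' then (1:ℝ) else 0) := by split <;> norm_num
  have h5 : (0:ℝ) ≤ (if ∀ i, f' (s.1 i) = s.2.2 i then (1:ℝ) else 0) := by
    split <;> norm_num
  positivity

lemma aux_post_sum (π : UDAClass X Y) {m n : ℕ} (s : Sample X Y m n)
    (hZ : 0 < Zval π s) : ∑ f' : X → Y, post π s f' = 1 := by
  unfold post
  rw [← Finset.sum_div, div_eq_one_iff_eq hZ.ne']
  rw [Finset.sum_comm]
  unfold Zval
  refine Finset.sum_congr rfl fun t _ => ?_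
  rw [Finset.sum_eq_single t.2.2]
  · simp
  · intro f' _ hne
    simp [Ne.symm hne]
  · intro h; exact absurd (Finset.mem_univ _) h

lemma aux_postA_sum (π : UDAClass X Y) {m n : ℕ} (s : Sample X Y m n)
    (hZ : 0 < Zval π s) (x : X) : ∑ y, postA π s x y = 1 := by
  unfold postA
  rw [Finset.sum_comm]
  have h : ∀ f' : X → Y,
      ∑ y, post π s f' * (if f' x = y then 1 else 0) = post π s f' := by
    intro f'
    rw [← Finset.mul_sum]
    simp
  rw [Finset.sum_congr rfl fun f' _ => h f', aux_post_sum π s hZ]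

lemma aux_postA_nonneg (π : UDAClass X Y) {m n : ℕ} (s : Sample X Y m n)
    (hZ : 0 < Zval π s) (x : X) (y : Y) : 0 ≤ postA π s x y := by
  refine Finset.sum_nonneg fun f' _ => mul_nonneg (aux_post_nonneg π s hZ f') ?_
  split <;> norm_num

lemma aux_postA_le_one (π : UDAClass X Y) {m n : ℕ} (s : Sample X Y m n)
    (hZ : 0 < Zval π s) (x : X) (y : Y) : postA π s x y ≤ 1 := by
  rw [← aux_postA_sum π s hZ x]
  exact Finset.single_le_sum (fun y' _ => aux_postA_nonneg π s hZ x y')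
    (Finset.mem_univ y)

lemma aux_E_eq (π : UDAClass X Y) {m n : ℕ} (s : Sample X Y m n)
    (hZ : 0 < Zval π s) (q : X → ℝ) (g : X → Y) :
    ∑ f' : X → Y, post π s f' * risk g q f'
      = ∑ x, q x * (1 - postA π s x (g x)) := by
  unfold risk
  simp_rw [Finset.mul_sum]
  rw [Finset.sum_comm]
  refine Finset.sum_congr rfl fun x _ => ?_
  have h : ∀ f' : X → Y,
      post π s f' * (q x * (if g x ≠ f' x then 1 else 0))
        = q x * (post π s f' - post π s f' * (if f' x = g x then 1 else 0)) := by
    intro f'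
    by_cases hc : f' x = g x
    · simp [hc]
    · have hc' : g x ≠ f' x := fun h' => hc h'.symm
      simp only [ne_eq, hc, hc', if_neg, if_pos, not_false_eq_true, if_true, if_false]
      ring
  rw [Finset.sum_congr rfl fun f' _ => h f', ← Finset.mul_sum]
  congr 1
  rw [Finset.sum_sub_distrib, aux_post_sum π s hZ]
  rfl

lemma aux_entropy2_eq {Y : Type*} [Fintype Y] [DecidableEq Y]
    (hk : Fintype.card Y = 2) (μ : Y → ℝ) (hsum : ∑ y, μ y = 1) (y₀ : Y) :
    entropy2 μ
      = -(μ y₀ * Real.logb 2 (μ y₀) + (1 - μ y₀) * Real.logb 2 (1 - μ y₀)) := by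
  have huniv2 : (Finset.univ : Finset Y).card = 2 := hk
  obtain ⟨u, w, huw, huniv⟩ := Finset.card_eq_two.mp huniv2
  have hsum' : μ u + μ w = 1 := by
    rw [← hsum, huniv, Finset.sum_pair huw]
  have hent : entropy2 μ = -(μ u * Real.logb 2 (μ u) + μ w * Real.logb 2 (μ w)) := by
    unfold entropy2
    rw [huniv, Finset.sum_pair huw]
  have hy : y₀ ∈ ({u, w} : Finset Y) := huniv ▸ Finset.mem_univ y₀
  rcases Finset.mem_insert.mp hy with h | h
  · subst h
    rw [hent, show (1:ℝ) - μ y₀ = μ w by linarith]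
  · have h' : y₀ = w := by simpa using h
    subst h'
    rw [hent, show (1:ℝ) - μ y₀ = μ u by linarith]
    ring

end AuxBookkeeping


/-- when `k = 2`, writing `E := Σ_{f'} ρ(f'|s) R(g|q,f')` for the
posterior-expected target-domain risk of any classifier `g`, one has
`U(s,q) ≤ 2√(E − E²)`; equivalently `E ≥ U(s,q)²/4 + E²`. -/
theorem posterior_expected_risk_of_card_eq_two
    {X Y : Type*} [Fintype X] [Nonempty X] [Fintype Y] [DecidableEq X] [DecidableEq Y]
    (hk : Fintype.card Y = 2)
    (π : UDAClass X Y) {m n : ℕ} (s : Sample X Y m n) (hZ : 0 < Zval π s)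
    (q : X → ℝ) (hq0 : ∀ x, 0 ≤ q x) (hq1 : ∑ x, q x = 1)
    (g : X → Y) :
    PTLU π s q ≤
      2 * Real.sqrt ((∑ f' : X → Y, post π s f' * risk g q f') -
        (∑ f' : X → Y, post π s f' * risk g q f') ^ 2) ∧
    (PTLU π s q) ^ 2 / 4 + (∑ f' : X → Y, post π s f' * risk g q f') ^ 2 ≤
      ∑ f' : X → Y, post π s f' * risk g q f' := by
  classical
  set E : ℝ := ∑ f' : X → Y, post π s f' * risk g q f' with hEdef
  have ha0 : ∀ x, 0 ≤ postA π s x (g x) := fun x => aux_postA_nonneg π s hZ x (g x)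
  have ha1 : ∀ x, postA π s x (g x) ≤ 1 := fun x => aux_postA_le_one π s hZ x (g x)
  have hE : E = ∑ x, q x * (1 - postA π s x (g x)) := aux_E_eq π s hZ q g
  have hE0 : 0 ≤ E := by
    rw [hE]
    exact Finset.sum_nonneg fun x _ => mul_nonneg (hq0 x) (by linarith [ha1 x])
  have hE1 : E ≤ 1 := by
    rw [hE, ← hq1]
    exact Finset.sum_le_sum fun x _ => by nlinarith [hq0 x, ha0 x]
  have hEE : 0 ≤ E - E^2 := by nlinarith
  have hU : PTLU π s q = ∑ x, q x *
      (-(postA π s x (g x) * Real.logb 2 (postA π s x (g x)) +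
        (1 - postA π s x (g x)) * Real.logb 2 (1 - postA π s x (g x)))) := by
    unfold PTLU
    refine Finset.sum_congr rfl fun x _ => ?_
    rw [aux_entropy2_eq hk (fun y => postA π s x y) (aux_postA_sum π s hZ x) (g x)]
  have hU0 : 0 ≤ PTLU π s q := by
    rw [hU]
    refine Finset.sum_nonneg fun x _ => mul_nonneg (hq0 x) ?_
    have l1 : Real.logb 2 (postA π s x (g x)) ≤ 0 :=
      Real.logb_nonpos one_lt_two (ha0 x) (ha1 x)
    have l2 : Real.logb 2 (1 - postA π s x (g x)) ≤ 0 :=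
      Real.logb_nonpos one_lt_two (by linarith [ha1 x]) (by linarith [ha0 x])
    nlinarith [mul_nonpos_of_nonneg_of_nonpos (ha0 x) l1,
      mul_nonpos_of_nonneg_of_nonpos (by linarith [ha1 x] : (0:ℝ) ≤ 1 - postA π s x (g x)) l2]
  have hv0 : ∀ x, 0 ≤ postA π s x (g x) * (1 - postA π s x (g x)) :=
    fun x => mul_nonneg (ha0 x) (by linarith [ha1 x])
  have hstep1 : PTLU π s q ≤
      2 * ∑ x, q x * Real.sqrt (postA π s x (g x) * (1 - postA π s x (g x))) := by
    rw [hU, Finset.mul_sum]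
    refine Finset.sum_le_sum fun x _ => ?_
    have hb := aux_binent_le (postA π s x (g x)) (ha0 x) (ha1 x)
    calc q x * (-(postA π s x (g x) * Real.logb 2 (postA π s x (g x)) +
          (1 - postA π s x (g x)) * Real.logb 2 (1 - postA π s x (g x))))
        ≤ q x * (2 * Real.sqrt (postA π s x (g x) * (1 - postA π s x (g x)))) :=
          mul_le_mul_of_nonneg_left hb (hq0 x)
      _ = 2 * (q x * Real.sqrt (postA π s x (g x) * (1 - postA π s x (g x)))) := by
          ring
  have hCS1 : (∑ x, q x * Real.sqrt (postA π s x (g x) * (1 - postA π s x (g x))))^2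
      ≤ ∑ x, q x * (postA π s x (g x) * (1 - postA π s x (g x))) := by
    have h := Finset.sum_sq_le_sum_mul_sum_of_sq_eq_mul Finset.univ
      (r := fun x => q x * Real.sqrt (postA π s x (g x) * (1 - postA π s x (g x))))
      (f := q) (g := fun x => q x * (postA π s x (g x) * (1 - postA π s x (g x))))
      (fun x _ => hq0 x) (fun x _ => mul_nonneg (hq0 x) (hv0 x))
      (fun x _ => by rw [mul_pow, Real.sq_sqrt (hv0 x)]; ring)
    rwa [hq1, one_mul] at h
  have hCS2 : E^2 ≤ ∑ x, q x * (1 - postA π s x (g x))^2 := by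
    have h := Finset.sum_sq_le_sum_mul_sum_of_sq_eq_mul Finset.univ
      (r := fun x => q x * (1 - postA π s x (g x)))
      (f := q) (g := fun x => q x * (1 - postA π s x (g x))^2)
      (fun x _ => hq0 x) (fun x _ => mul_nonneg (hq0 x) (sq_nonneg _))
      (fun x _ => by ring)
    rw [hq1, one_mul] at h
    rw [hE]
    exact h
  have hsplit : ∑ x, q x * (postA π s x (g x) * (1 - postA π s x (g x)))
      = E - ∑ x, q x * (1 - postA π s x (g x))^2 := by
    rw [hE, ← Finset.sum_sub_distrib]
    exact Finset.sum_congr rfl fun x _ => by ring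
  have hSnn : 0 ≤ ∑ x, q x * Real.sqrt (postA π s x (g x) * (1 - postA π s x (g x))) :=
    Finset.sum_nonneg fun x _ => mul_nonneg (hq0 x) (Real.sqrt_nonneg _)
  have hSle : ∑ x, q x * Real.sqrt (postA π s x (g x) * (1 - postA π s x (g x)))
      ≤ Real.sqrt (E - E^2) := by
    have h2 : (∑ x, q x * Real.sqrt (postA π s x (g x) * (1 - postA π s x (g x))))^2
        ≤ E - E^2 := by
      calc (∑ x, q x * Real.sqrt (postA π s x (g x) * (1 - postA π s x (g x))))^2
          ≤ ∑ x, q x * (postA π s x (g x) * (1 - postA π s x (g x))) := hCS1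
        _ = E - ∑ x, q x * (1 - postA π s x (g x))^2 := hsplit
        _ ≤ E - E^2 := by linarith [hCS2]
    calc ∑ x, q x * Real.sqrt (postA π s x (g x) * (1 - postA π s x (g x)))
        = Real.sqrt ((∑ x, q x *
            Real.sqrt (postA π s x (g x) * (1 - postA π s x (g x))))^2) :=
          (Real.sqrt_sq hSnn).symm
      _ ≤ Real.sqrt (E - E^2) := Real.sqrt_le_sqrt h2
  have main1 : PTLU π s q ≤ 2 * Real.sqrt (E - E^2) := by linarith [hstep1, hSle]
  refine ⟨main1, ?_⟩
  have hs := Real.sq_sqrt hEE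
  nlinarith [main1, hU0, Real.sqrt_nonneg (E - E^2), hs]


end
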